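/- Suppose k ≥ 3. Let G be a k-regular digraph (with connected underlying graph) equipped with an η-function θ where 0 ≤ η ≤ π, and let d be the number of digons of G. Then Tr(U_θ^{(2,+)}) = 2|E(G^±)| if 0 ≤ η < π/2, and Tr(U_θ^{(2,+)}) = 2d if π/2 ≤ η ≤ π. -/

import Mathlib

open Matrix Polynomial

noncomputable section

variable {V : Type} [Fintype V] [DecidableEq V]

/-- The set of symmetric arcs of a simple graph `G`: ordered pairs of adjacent vertices. -/
abbrev GArc (G : SimpleGraph V) : Type := {p : V × V // G.Adj p.1 p.2}

/-- The origin of an arc. -/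
def arcO {G : SimpleGraph V} (a : GArc G) : V := a.1.1

/-- The terminus of an arc. -/
def arcT {G : SimpleGraph V} (a : GArc G) : V := a.1.2

/-- The inverse of an arc. -/
def arcInv {G : SimpleGraph V} (a : GArc G) : GArc G := ⟨(a.1.2, a.1.1), a.2.symm⟩

/-- The boundary matrix `K`, with `K_{v,a} = δ_{v,t(a)} / √(deg t(a))`. -/
def bdK (G : SimpleGraph V) [DecidableRel G.Adj] : Matrix V (GArc G) ℂ :=
  fun v a => if v = arcT a then ((1 / Real.sqrt (G.degree (arcT a)) : ℝ) : ℂ) else 0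

/-- The coin operator `C = 2K*K - I`. -/
def coinC (G : SimpleGraph V) [DecidableRel G.Adj] : Matrix (GArc G) (GArc G) ℂ :=
  (2 : ℂ) • ((bdK G)ᴴ * bdK G) - 1

/-- The shift operator `S`, with `S_{ab} = δ_{a,b⁻¹}`. -/
def shiftS (G : SimpleGraph V) : Matrix (GArc G) (GArc G) ℂ :=
  fun a b => if a = arcInv b then 1 else 0

/-- The perturbed shift `S_θ`, with `(S_θ)_{ab} = e^{iθ(b)} δ_{a,b⁻¹}`. -/
def shiftStheta (G : SimpleGraph V) (θ : GArc G → ℝ) : Matrix (GArc G) (GArc G) ℂ :=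
  fun a b => if a = arcInv b then Complex.exp ((θ b : ℂ) * Complex.I) else 0

/-- The Grover transfer matrix `U = SC`. -/
def groverU (G : SimpleGraph V) [DecidableRel G.Adj] : Matrix (GArc G) (GArc G) ℂ :=
  shiftS G * coinC G

/-- The transfer matrix `U_θ = S_θ C`. -/
def transferU (G : SimpleGraph V) [DecidableRel G.Adj] (θ : GArc G → ℝ) :
    Matrix (GArc G) (GArc G) ℂ :=
  shiftStheta G θ * coinC G

/-- The diagonal matrix `D_θ` with `(D_θ)_{ab} = e^{iθ(a)} δ_{ab}`. -/
def Dtheta (G : SimpleGraph V) (θ : GArc G → ℝ) : Matrix (GArc G) (GArc G) ℂ :=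
  Matrix.diagonal fun a => Complex.exp ((θ a : ℂ) * Complex.I)

/-- The positive support of a (real-valued) complex matrix. -/
def suppPos {α : Type} (M : Matrix α α ℂ) : Matrix α α ℂ :=
  fun a b => if 0 < (M a b).re then 1 else 0

/-- The negative support of a (real-valued) complex matrix. -/
def suppNeg {α : Type} (M : Matrix α α ℂ) : Matrix α α ℂ :=
  fun a b => if (M a b).re < 0 then 1 else 0

/-- The positive support of a real matrix. -/
def suppPosR {α : Type} (M : Matrix α α ℝ) : Matrix α α ℝ :=
  fun a b => if 0 < M a b then 1 else 0

/-- The negative support of a real matrix. -/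
def suppNegR {α : Type} (M : Matrix α α ℝ) : Matrix α α ℝ :=
  fun a b => if M a b < 0 then 1 else 0

/-- A digraph on `V`: an irreflexive (Boolean) arc relation. -/
structure Dgraph (V : Type) where
  adj : V → V → Bool
  loopless : ∀ v, adj v v = false

namespace Dgraph

/-- `(x,y)` is an arc of `D`. -/
def Adj (D : Dgraph V) (x y : V) : Prop := D.adj x y = true

instance (D : Dgraph V) : DecidableRel D.Adj := fun _ _ => by unfold Adj; infer_instance

/-- The underlying (undirected simple) graph `G^±`. -/
def underlying (D : Dgraph V) : SimpleGraph V where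
  Adj x y := D.Adj x y ∨ D.Adj y x
  symm := ⟨fun _ _ h => h.symm⟩
  loopless := ⟨fun v h => by
    rcases h with h | h <;> exact absurd h (by simp [Adj, D.loopless v])⟩

instance (D : Dgraph V) : DecidableRel D.underlying.Adj :=
  fun x y => inferInstanceAs (Decidable (D.Adj x y ∨ D.Adj y x))

/-- The transpose digraph `G⁻¹`. -/
def transpose (D : Dgraph V) : Dgraph V where
  adj x y := D.adj y x
  loopless := D.loopless

end Dgraph

/-- The `η`-function of a digraph `D`: `η` on `A∖A⁻¹`, `-η` on `A⁻¹∖A`, `0` on digons. -/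
def etaFun (D : Dgraph V) (η : ℝ) (a : GArc D.underlying) : ℝ :=
  if D.Adj (arcO a) (arcT a) then (if D.Adj (arcT a) (arcO a) then 0 else η) else -η

/-- The `η`-Hermitian adjacency matrix `H_η`. -/
def Heta (D : Dgraph V) (η : ℝ) : Matrix V V ℂ :=
  fun x y =>
    if D.Adj x y then (if D.Adj y x then 1 else Complex.exp ((η : ℂ) * Complex.I))
    else if D.Adj y x then Complex.exp (-(η : ℂ) * Complex.I) else 0

/-- The diagonal matrix `D^{-1/2}` of inverse square roots of degrees. -/
def degHalfInv (D : Dgraph V) : Matrix V V ℂ :=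
  Matrix.diagonal fun x => ((1 / Real.sqrt (D.underlying.degree x) : ℝ) : ℂ)

/-- The normalized `η`-Hermitian adjacency matrix `H̃_η = D^{-1/2} H_η D^{-1/2}`. -/
def normHeta (D : Dgraph V) (η : ℝ) : Matrix V V ℂ :=
  degHalfInv D * Heta D η * degHalfInv D

/-- The multiset of preimages of `μ` under `φ(z) = (z + z⁻¹)/2` on the unit circle:
the distinct roots of `z² - 2μz + 1`. -/
def phiInv (μ : ℂ) : Multiset ℂ :=
  ((X ^ 2 - Polynomial.C (2 * μ) * X + 1 : Polynomial ℂ).roots).dedup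

/-- A closed path in a graph: a nonempty chain of arcs returning to its start. -/
structure ClosedPath (G : SimpleGraph V) where
  arcs : List (GArc G)
  ne : arcs ≠ []
  chain : arcs.Chain' fun a b => arcT a = arcO b
  closed : arcT (arcs.getLast ne) = arcO (arcs.head ne)

/-- `ℐ(c) = Σ_j θ(a_j)` for a closed path `c`. -/
def pathSum {G : SimpleGraph V} (θ : GArc G → ℝ) (c : ClosedPath G) : ℝ :=
  (c.arcs.map θ).sum

/-- `x ∈ 2πℤ`. -/
def in2piZ (x : ℝ) : Prop := ∃ m : ℤ, x = 2 * Real.pi * m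

/-- `x ∈ 2π(ℤ + 1/2)`. -/
def in2piZhalf (x : ℝ) : Prop := ∃ m : ℤ, x = 2 * Real.pi * (m + 1 / 2)

/-- The matrix `F_t` with `(F_t)_{x,a} = δ_{x,t(a)}`. -/
def Ft (G : SimpleGraph V) : Matrix V (GArc G) ℂ := fun x a => if x = arcT a then 1 else 0

/-- The matrix `F_o` with `(F_o)_{x,a} = δ_{x,o(a)}`. -/
def Fo (G : SimpleGraph V) : Matrix V (GArc G) ℂ := fun x a => if x = arcO a then 1 else 0

/-- The 0/1 matrix `R` with `R_{ab} = 1` iff `m(a,b) = (t(b),o(a)) ∈ A(G) ∩ A(G)⁻¹`. -/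
def Rmat (D : Dgraph V) : Matrix (GArc D.underlying) (GArc D.underlying) ℂ :=
  fun a b => if D.Adj (arcT b) (arcO a) ∧ D.Adj (arcO a) (arcT b) then 1 else 0

/-- `U_θ^{(n,+)}`: the 0/1 matrix with `(a,b)` entry `1` iff `Re(D_θ U_θⁿ)_{ab} > 0`. -/
def suppPow (D : Dgraph V) (η : ℝ) (n : ℕ) :
    Matrix (GArc D.underlying) (GArc D.underlying) ℂ :=
  suppPos (Dtheta D.underlying (etaFun D η) * transferU D.underlying (etaFun D η) ^ n)

/-- `U_θ^{(n,−)}`: the 0/1 matrix with `(a,b)` entry `1` iff `Re(D_θ U_θⁿ)_{ab} < 0`. -/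
def suppPowNeg (D : Dgraph V) (η : ℝ) (n : ℕ) :
    Matrix (GArc D.underlying) (GArc D.underlying) ℂ :=
  suppNeg (Dtheta D.underlying (etaFun D η) * transferU D.underlying (etaFun D η) ^ n)

/-- The number of digons of a digraph. -/
def digonCount (D : Dgraph V) : ℕ :=
  (Finset.univ.filter fun p : V × V => D.Adj p.1 p.2 ∧ D.Adj p.2 p.1).card / 2

/-- The digraph `Y_{a,n-a}`: two complete (digon) blocks `[a]` and `[n]∖[a]`, with all
arcs from the first block to the second. -/
def Ydigraph (n a : ℕ) : Dgraph (Fin n) where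
  adj x y := decide ((x ≠ y) ∧
    ((x.val < a ∧ y.val < a) ∨ (a ≤ x.val ∧ a ≤ y.val) ∨ (x.val < a ∧ a ≤ y.val)))
  loopless := fun v => by simp

/-- The shift operator as a real matrix. -/
def shiftSR (G : SimpleGraph V) : Matrix (GArc G) (GArc G) ℝ :=
  fun a b => if a = arcInv b then 1 else 0

/-- The Grover transfer matrix as a real matrix, given by its entries
`U_{ab} = (2/deg t(b)) δ_{t(b),o(a)} − δ_{a⁻¹,b}`. -/
def groverEnt (G : SimpleGraph V) [DecidableRel G.Adj] : Matrix (GArc G) (GArc G) ℝ :=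
  fun a b => 2 / (G.degree (arcT b)) * (if arcT b = arcO a then 1 else 0)
    - (if arcInv a = b then 1 else 0)

end

/-! On a `k`-regular graph the entries of `U_θ` are `e^{iθ(a⁻¹)} (2/k · δ_{o(a),t(b)} − δ_{a⁻¹,b})`,
so the only two-step return from an arc `a` to itself is `a → a⁻¹ → a`, and
`(D_θ U_θ²)_{aa} = e^{iθ(a)} e^{iθ(a⁻¹)} e^{iθ(a)} (2/k − 1)² = e^{iθ(a)} (2/k − 1)²`
because an `η`-function is antisymmetric. For `k ≥ 3` the factor `(2/k − 1)²` is positive,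
so `Tr(U_θ^{(2,+)})` counts the arcs with `cos θ(a) > 0`. Since `θ` only takes the values
`0, ±η`, these are all arcs when `η < π/2`, and exactly the arcs lying on digons
when `η ≥ π/2`. -/

section Arcs

variable {V : Type} {G : SimpleGraph V}

@[simp] lemma arcInv_arcInv (a : GArc G) : arcInv (arcInv a) = a := rfl

@[simp] lemma arcT_arcInv (a : GArc G) : arcT (arcInv a) = arcO a := rfl

@[simp] lemma arcO_arcInv (a : GArc G) : arcO (arcInv a) = arcT a := rfl

lemma eq_arcInv_iff {a b : GArc G} : b = arcInv a ↔ arcO b = arcT a ∧ arcT b = arcO a := by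
  constructor
  · rintro rfl; exact ⟨rfl, rfl⟩
  · rintro ⟨ho, ht⟩; exact Subtype.ext (Prod.ext ho ht)

lemma card_gArc [Fintype V] [DecidableRel G.Adj] :
    Fintype.card (GArc G) = 2 * G.edgeFinset.card := by
  rw [← SimpleGraph.dart_card_eq_twice_card_edges]
  exact Fintype.card_congr
    { toFun := fun a => ⟨a.1, a.2⟩, invFun := fun d => ⟨d.toProd, d.adj⟩,
      left_inv := fun _ => rfl, right_inv := fun _ => rfl }

end Arcs

section Regular

variable {V : Type} [Fintype V] [DecidableEq V] {G : SimpleGraph V} [DecidableRel G.Adj]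
  {k : ℕ}

lemma coinC_apply (hreg : G.IsRegularOfDegree k) (a b : GArc G) :
    coinC G a b = (if arcT a = arcT b then (2 / k : ℂ) else 0) - if a = b then 1 else 0 := by
  have hK : ∀ v c, bdK G v c = if v = arcT c then ((1 / Real.sqrt k : ℝ) : ℂ) else 0 := by
    intro v c; simp [bdK, hreg.degree_eq]
  have hKK : ((bdK G)ᴴ * bdK G) a b = if arcT a = arcT b then ((1 / k : ℝ) : ℂ) else 0 := by
    rw [Matrix.mul_apply, Finset.sum_eq_single_of_mem (arcT a) (Finset.mem_univ _)]
    · rw [Matrix.conjTranspose_apply, hK, hK, if_pos rfl]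
      split_ifs
      · rw [Complex.star_def, Complex.conj_ofReal, ← Complex.ofReal_mul, div_mul_div_comm,
          one_mul, Real.mul_self_sqrt k.cast_nonneg]
      · rw [mul_zero]
    · intro v _ hv
      rw [Matrix.conjTranspose_apply, hK, if_neg hv, star_zero, zero_mul]
  rw [coinC, Matrix.sub_apply, Matrix.smul_apply, hKK, Matrix.one_apply]
  split_ifs <;> push_cast [smul_eq_mul] <;> ring

lemma transferU_apply (hreg : G.IsRegularOfDegree k) (θ : GArc G → ℝ) (a b : GArc G) :
    transferU G θ a b = Complex.exp (θ (arcInv a) * Complex.I) *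
      ((if arcO a = arcT b then (2 / k : ℂ) else 0) - if arcInv a = b then 1 else 0) := by
  rw [transferU, Matrix.mul_apply, Finset.sum_eq_single_of_mem (arcInv a) (Finset.mem_univ _)]
  · rw [shiftStheta, if_pos (arcInv_arcInv a).symm, coinC_apply hreg, arcT_arcInv]
  · intro c _ hc
    rw [shiftStheta, if_neg fun h => hc (by rw [h, arcInv_arcInv]), zero_mul]

lemma transferU_sq_apply_self (hreg : G.IsRegularOfDegree k) (θ : GArc G → ℝ)
    (a : GArc G) :
    (transferU G θ ^ 2) a a = Complex.exp (θ (arcInv a) * Complex.I) *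
      Complex.exp (θ a * Complex.I) * ((2 / k : ℂ) - 1) ^ 2 := by
  rw [pow_two, Matrix.mul_apply, Finset.sum_eq_single_of_mem (arcInv a) (Finset.mem_univ _)]
  · simp only [transferU_apply hreg, arcInv_arcInv, arcO_arcInv, arcT_arcInv, if_true]
    ring
  · intro b _ hb
    rw [transferU_apply hreg, transferU_apply hreg]
    have hb' : arcInv a ≠ b := fun h => hb h.symm
    by_cases hab : arcO a = arcT b
    · have hba : arcO b ≠ arcT a := fun h => hb (eq_arcInv_iff.mpr ⟨h, hab.symm⟩)
      have hb'' : arcInv b ≠ a := fun h => hb (by rw [← h, arcInv_arcInv])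
      simp [hba, hb'']
    · simp [hab, hb']

lemma Dtheta_mul_transferU_sq_apply_self (hreg : G.IsRegularOfDegree k) {θ : GArc G → ℝ}
    (hθ : ∀ a, θ (arcInv a) = -θ a) (a : GArc G) :
    (Dtheta G θ * transferU G θ ^ 2) a a =
      Complex.exp (θ a * Complex.I) * (((2 / k - 1) ^ 2 : ℝ) : ℂ) := by
  rw [Dtheta, Matrix.diagonal_mul, transferU_sq_apply_self hreg, hθ, Complex.ofReal_neg,
    neg_mul, Complex.exp_neg, inv_mul_cancel₀ (Complex.exp_ne_zero _), one_mul]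
  push_cast
  rfl

lemma trace_suppPos_eq_card {α : Type} [Fintype α] (M : Matrix α α ℂ) :
    (suppPos M).trace = (Finset.univ.filter fun a => 0 < (M a a).re).card := by
  rw [Finset.card_filter, Matrix.trace]
  push_cast
  rfl

lemma trace_suppPos_Dtheta_mul_transferU_sq (hreg : G.IsRegularOfDegree k) (hk : k ≠ 2)
    {θ : GArc G → ℝ} (hθ : ∀ a, θ (arcInv a) = -θ a) :
    (suppPos (Dtheta G θ * transferU G θ ^ 2)).trace =
      (Finset.univ.filter fun a => 0 < Real.cos (θ a)).card := by
  have hfac : 0 < (2 / (k : ℝ) - 1) ^ 2 := by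
    refine sq_pos_of_ne_zero ?_
    rcases eq_or_ne k 0 with rfl | hk0
    · norm_num
    · rw [sub_ne_zero, Ne, div_eq_one_iff_eq (Nat.cast_ne_zero.mpr hk0)]
      exact_mod_cast hk.symm
  rw [trace_suppPos_eq_card]
  congr 3
  ext a
  rw [Dtheta_mul_transferU_sq_apply_self hreg hθ, Complex.re_mul_ofReal,
    Complex.exp_ofReal_mul_I_re, mul_pos_iff_of_pos_right hfac]

end Regular

section Digraph

variable {V : Type} (D : Dgraph V)

lemma etaFun_arcInv (η : ℝ) (a : GArc D.underlying) :
    etaFun D η (arcInv a) = -etaFun D η a := by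
  have ha : D.Adj (arcO a) (arcT a) ∨ D.Adj (arcT a) (arcO a) := a.2
  rw [etaFun, etaFun, arcO_arcInv, arcT_arcInv]
  by_cases h₁ : D.Adj (arcO a) (arcT a) <;> by_cases h₂ : D.Adj (arcT a) (arcO a) <;>
    simp_all

def digonGraph : SimpleGraph V where
  Adj x y := D.Adj x y ∧ D.Adj y x
  symm := ⟨fun _ _ h => ⟨h.2, h.1⟩⟩
  loopless := ⟨fun v h => by simp [Dgraph.Adj, D.loopless v] at h⟩

instance : DecidableRel (digonGraph D).Adj :=
  fun x y => inferInstanceAs (Decidable (D.Adj x y ∧ D.Adj y x))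

variable [Fintype V]

lemma digonCount_eq_card_edgeFinset :
    digonCount D = (digonGraph D).edgeFinset.card := by
  rw [digonCount, ← Fintype.card_subtype]
  change Fintype.card (GArc (digonGraph D)) / 2 = _
  rw [card_gArc, Nat.mul_div_cancel_left _ two_pos]

lemma card_filter_isDigon :
    (Finset.univ.filter fun a : GArc D.underlying =>
      D.Adj (arcO a) (arcT a) ∧ D.Adj (arcT a) (arcO a)).card = 2 * digonCount D := by
  rw [← Fintype.card_subtype, digonCount_eq_card_edgeFinset, ← card_gArc]
  exact Fintype.card_congr (Equiv.subtypeSubtypeEquivSubtype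
    (p := fun p : V × V => D.underlying.Adj p.1 p.2) (q := fun p => (digonGraph D).Adj p.1 p.2)
    fun h => Or.inl h.1)

end Digraph

section EtaFunction

variable {V : Type} (D : Dgraph V) {η : ℝ}

lemma cos_etaFun_pos (hη : 0 < Real.cos η) (a : GArc D.underlying) :
    0 < Real.cos (etaFun D η a) := by
  unfold etaFun
  split_ifs <;> simp [hη]

lemma cos_etaFun_pos_iff (hη : Real.cos η ≤ 0) (a : GArc D.underlying) :
    0 < Real.cos (etaFun D η a) ↔ D.Adj (arcO a) (arcT a) ∧ D.Adj (arcT a) (arcO a) := by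
  unfold etaFun
  split_ifs <;> simp_all [not_lt.mpr hη]

end EtaFunction

theorem stmt18_general {V : Type} [Fintype V] [DecidableEq V] (k : ℕ) (hk : 3 ≤ k) (η : ℝ)
    (hη0 : 0 ≤ η) (hηpi : η ≤ Real.pi) (D : Dgraph V)
    (hreg : ∀ v, D.underlying.degree v = k) :
    (η < Real.pi / 2 →
      (suppPow D η 2).trace = 2 * (D.underlying.edgeFinset.card : ℂ)) ∧
    (Real.pi / 2 ≤ η →
      (suppPow D η 2).trace = 2 * (digonCount D : ℂ)) := by
  have htrace : (suppPow D η 2).trace =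
      (Finset.univ.filter fun a => 0 < Real.cos (etaFun D η a)).card :=
    trace_suppPos_Dtheta_mul_transferU_sq hreg (by omega) (etaFun_arcInv D η)
  constructor
  · intro hη
    have hcos : 0 < Real.cos η := Real.cos_pos_of_mem_Ioo ⟨by linarith [Real.pi_pos], hη⟩
    rw [htrace, Finset.filter_true_of_mem fun a _ => cos_etaFun_pos D hcos a,
      Finset.card_univ, card_gArc]
    push_cast
    rfl
  · intro hη
    have hcos : Real.cos η ≤ 0 := Real.cos_nonpos_of_pi_div_two_le_of_le hη (by linarith)
    rw [htrace, Finset.filter_congr fun a _ => cos_etaFun_pos_iff D hcos a,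
      card_filter_isDigon]
    push_cast
    rfl

/-- For a `k`-regular digraph (`k ≥ 3`) with `d` digons and `η ∈ [0, π]`:
`Tr(U_θ^{(2,+)}) = 2|E(G^±)|` if `0 ≤ η < π/2`, and `Tr(U_θ^{(2,+)}) = 2d` if
`π/2 ≤ η ≤ π`. -/
theorem stmt18 {V : Type} [Fintype V] [DecidableEq V] (k : ℕ) (hk : 3 ≤ k) (η : ℝ)
    (hη0 : 0 ≤ η) (hηpi : η ≤ Real.pi) (D : Dgraph V)
    (hconn : D.underlying.Connected) (hreg : ∀ v, D.underlying.degree v = k) :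
    (η < Real.pi / 2 →
      (suppPow D η 2).trace = 2 * (D.underlying.edgeFinset.card : ℂ)) ∧
    (Real.pi / 2 ≤ η →
      (suppPow D η 2).trace = 2 * (digonCount D : ℂ)) :=
  stmt18_general k hk η hη0 hηpi D hreg
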